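/- Let 0 ≤ a ≤ α ≤ 1 and let b ≥ 0. If the effect B = (1/2)(1 + b·m·σ) with unit vector m orthogonal to a is coexistent with A = (1/2)(α·1 + a·n·σ) (unit vector n), then coexistence holds if and only if b ≤ (1/2)√((2−α)² − a²) + (1/2)√(α² − a²). -/

import Mathlib

/-!
A Hermitian `2 × 2` matrix is positive semidefinite iff its trace and determinant are
nonnegative, so `qubitEffect γ v` is positive semidefinite iff `‖v‖ ≤ γ`. Writing the
joint element `G₁` of the POVM as `qubitEffect γ g`, coexistence of `qubitEffect α a` and
`qubitEffect β b` becomes the four cone conditions `‖g‖ ≤ γ`, `‖a - g‖ ≤ α - γ`,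
`‖b - g‖ ≤ β - γ` and `‖a + b - g‖ ≤ 2 + γ - α - β`.

Project onto the plane of `n` and `m`, with `u, v` the coordinates of `g`. The first two
conditions make `(γ, u)` and `(α - γ, a - u)` future timelike vectors of the Minkowski plane
whose Minkowski lengths both dominate `v`; by the reverse triangle inequality their sum
`(α, a)` has length `√(α² - a²) ≥ 2v`. In the same way the last two conditions give
`√((2 - α)² - a²) ≥ 2(b - v)`. Conversely, splitting `2b = s + (2b - s)` with
`s ≤ √(α² - a²)` and `2b - s ≤ √((2 - α)² - a²)`, the choice `γ = α / 2`,
`g = (a / 2) n + (s / 2) m` meets all four conditions.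
-/

open scoped ComplexOrder RealInnerProductSpace

/-- The vector of Pauli matrices contracted with a real 3-vector: `v · σ`. -/
noncomputable def pauli (v : EuclideanSpace ℝ (Fin 3)) : Matrix (Fin 2) (Fin 2) ℂ :=
  (v 0 : ℂ) • !![0, 1; 1, 0] + (v 1 : ℂ) • !![0, -Complex.I; Complex.I, 0] +
    (v 2 : ℂ) • !![1, 0; 0, -1]

/-- The qubit effect `(1/2)(α·1 + v·σ)`. -/
noncomputable def qubitEffect (α : ℝ) (v : EuclideanSpace ℝ (Fin 3)) :
    Matrix (Fin 2) (Fin 2) ℂ :=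
  (1 / 2 : ℂ) • ((α : ℂ) • (1 : Matrix (Fin 2) (Fin 2) ℂ) + pauli v)

/-- Effects `A` and `B` are coexistent: there is a four-outcome POVM `(G₁,G₂,G₃,G₄)`
with `A = G₁ + G₂` and `B = G₁ + G₃`. -/
def Coexistent (A B : Matrix (Fin 2) (Fin 2) ℂ) : Prop :=
  ∃ G₁ G₂ G₃ G₄ : Matrix (Fin 2) (Fin 2) ℂ,
    G₁.PosSemidef ∧ G₂.PosSemidef ∧ G₃.PosSemidef ∧ G₄.PosSemidef ∧
    G₁ + G₂ + G₃ + G₄ = 1 ∧ A = G₁ + G₂ ∧ B = G₁ + G₃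

namespace Matrix

theorem IsHermitian.posSemidef_iff_trace_det {𝕜 : Type*} [RCLike 𝕜]
    {A : Matrix (Fin 2) (Fin 2) 𝕜} (hA : A.IsHermitian) :
    A.PosSemidef ↔ 0 ≤ A.trace ∧ 0 ≤ A.det := by
  rw [hA.posSemidef_iff_eigenvalues_nonneg, hA.trace_eq_sum_eigenvalues,
    hA.det_eq_prod_eigenvalues, Pi.le_def, Fin.forall_fin_two, Fin.sum_univ_two,
    Fin.prod_univ_two, ← RCLike.ofReal_add, ← RCLike.ofReal_mul, RCLike.ofReal_nonneg,
    RCLike.ofReal_nonneg, Pi.zero_apply, Pi.zero_apply]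
  exact ⟨fun ⟨hx, hy⟩ ↦ ⟨add_nonneg hx hy, mul_nonneg hx hy⟩,
    fun ⟨hs, hp⟩ ↦ ⟨by nlinarith, by nlinarith⟩⟩

end Matrix

lemma pauli_add (v w : EuclideanSpace ℝ (Fin 3)) : pauli (v + w) = pauli v + pauli w := by
  simp only [pauli, PiLp.add_apply, Complex.ofReal_add, add_smul]
  abel

lemma pauli_sub (v w : EuclideanSpace ℝ (Fin 3)) : pauli (v - w) = pauli v - pauli w := by
  simp only [pauli, PiLp.sub_apply, Complex.ofReal_sub, sub_smul]
  abel

lemma qubitEffect_add (α β : ℝ) (v w : EuclideanSpace ℝ (Fin 3)) :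
    qubitEffect α v + qubitEffect β w = qubitEffect (α + β) (v + w) := by
  simp only [qubitEffect, pauli_add, Complex.ofReal_add]
  module

lemma qubitEffect_sub (α β : ℝ) (v w : EuclideanSpace ℝ (Fin 3)) :
    qubitEffect α v - qubitEffect β w = qubitEffect (α - β) (v - w) := by
  simp only [qubitEffect, pauli_sub, Complex.ofReal_sub]
  module

lemma qubitEffect_two_zero : qubitEffect 2 0 = 1 := by
  simp only [qubitEffect, pauli, PiLp.zero_apply, Complex.ofReal_zero, zero_smul, add_zero]
  module

lemma qubitEffect_eq_of (γ : ℝ) (v : EuclideanSpace ℝ (Fin 3)) :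
    qubitEffect γ v = !![((γ + v 2 : ℝ) : ℂ) / 2, (v 0 - v 1 * Complex.I) / 2;
      (v 0 + v 1 * Complex.I) / 2, ((γ - v 2 : ℝ) : ℂ) / 2] := by
  ext i j
  fin_cases i <;> fin_cases j <;> simp [qubitEffect, pauli] <;> ring

lemma isHermitian_qubitEffect (γ : ℝ) (v : EuclideanSpace ℝ (Fin 3)) :
    (qubitEffect γ v).IsHermitian := by
  rw [qubitEffect_eq_of]
  ext i j
  fin_cases i <;> fin_cases j <;> simp [Complex.conj_ofReal, sub_eq_add_neg]

lemma trace_qubitEffect (γ : ℝ) (v : EuclideanSpace ℝ (Fin 3)) :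
    (qubitEffect γ v).trace = γ := by
  rw [qubitEffect_eq_of, Matrix.trace_fin_two_of]
  push_cast
  ring

lemma det_qubitEffect (γ : ℝ) (v : EuclideanSpace ℝ (Fin 3)) :
    (qubitEffect γ v).det = ((γ ^ 2 - ‖v‖ ^ 2) / 4 : ℝ) := by
  rw [qubitEffect_eq_of, Matrix.det_fin_two_of, EuclideanSpace.norm_sq_eq, Fin.sum_univ_three]
  simp only [Real.norm_eq_abs, sq_abs]
  push_cast
  linear_combination ((v 1 : ℂ) ^ 2 / 4) * Complex.I_sq

lemma qubitEffect_posSemidef_iff (γ : ℝ) (v : EuclideanSpace ℝ (Fin 3)) :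
    (qubitEffect γ v).PosSemidef ↔ ‖v‖ ≤ γ := by
  rw [(isHermitian_qubitEffect γ v).posSemidef_iff_trace_det, trace_qubitEffect,
    det_qubitEffect, Complex.zero_le_real, Complex.zero_le_real]
  constructor
  · rintro ⟨hγ, hdet⟩
    exact (sq_le_sq₀ (norm_nonneg v) hγ).1 (by linarith)
  · intro h
    exact ⟨(norm_nonneg v).trans h, by nlinarith [norm_nonneg v]⟩

lemma Matrix.IsHermitian.exists_eq_qubitEffect {G : Matrix (Fin 2) (Fin 2) ℂ}
    (hG : G.IsHermitian) : ∃ γ v, G = qubitEffect γ v := by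
  refine ⟨(G 0 0).re + (G 1 1).re,
    !₂[2 * (G 1 0).re, 2 * (G 1 0).im, (G 0 0).re - (G 1 1).re], ?_⟩
  have h00 := hG.apply 0 0
  have h11 := hG.apply 1 1
  have h01 := hG.apply 0 1
  simp only [Complex.ext_iff, Complex.star_def, Complex.conj_re, Complex.conj_im] at h00 h11 h01
  rw [qubitEffect_eq_of]
  ext i j
  fin_cases i <;> fin_cases j <;> simp [Complex.ext_iff] <;> grind

lemma coexistent_iff_exists_posSemidef (A B : Matrix (Fin 2) (Fin 2) ℂ) :
    Coexistent A B ↔ ∃ G : Matrix (Fin 2) (Fin 2) ℂ, G.PosSemidef ∧ (A - G).PosSemidef ∧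
      (B - G).PosSemidef ∧ (1 - A - B + G).PosSemidef := by
  constructor
  · rintro ⟨G₁, G₂, G₃, G₄, h₁, h₂, h₃, h₄, hsum, rfl, rfl⟩
    refine ⟨G₁, h₁, ?_, ?_, ?_⟩
    · rwa [add_sub_cancel_left]
    · rwa [add_sub_cancel_left]
    · convert h₄ using 1
      rw [← hsum]
      abel
  · rintro ⟨G, hG, hA, hB, hAB⟩
    exact ⟨G, A - G, B - G, 1 - A - B + G, hG, hA, hB, hAB, by abel, by abel, by abel⟩

lemma coexistent_qubitEffect_iff (α β : ℝ) (a b : EuclideanSpace ℝ (Fin 3)) :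
    Coexistent (qubitEffect α a) (qubitEffect β b) ↔ ∃ γ g, ‖g‖ ≤ γ ∧ ‖a - g‖ ≤ α - γ ∧
      ‖b - g‖ ≤ β - γ ∧ ‖a + b - g‖ ≤ 2 + γ - α - β := by
  have hcompl (γ : ℝ) (g : EuclideanSpace ℝ (Fin 3)) :
      1 - qubitEffect α a - qubitEffect β b + qubitEffect γ g =
        qubitEffect (2 + γ - α - β) (g - (a + b)) := by
    rw [← qubitEffect_two_zero, qubitEffect_sub, qubitEffect_sub, qubitEffect_add]
    congr 1 <;> [ring; abel]
  have hpsd (γ : ℝ) (g : EuclideanSpace ℝ (Fin 3)) :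
      ((qubitEffect γ g).PosSemidef ∧ (qubitEffect α a - qubitEffect γ g).PosSemidef ∧
        (qubitEffect β b - qubitEffect γ g).PosSemidef ∧
        (1 - qubitEffect α a - qubitEffect β b + qubitEffect γ g).PosSemidef) ↔
      ‖g‖ ≤ γ ∧ ‖a - g‖ ≤ α - γ ∧ ‖b - g‖ ≤ β - γ ∧ ‖a + b - g‖ ≤ 2 + γ - α - β := by
    simp only [qubitEffect_sub, hcompl, qubitEffect_posSemidef_iff, norm_sub_rev g]
  rw [coexistent_iff_exists_posSemidef]
  constructor
  · rintro ⟨G, hG, hrest⟩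
    obtain ⟨γ, g, rfl⟩ := hG.isHermitian.exists_eq_qubitEffect
    exact ⟨γ, g, (hpsd γ g).1 ⟨hG, hrest⟩⟩
  · rintro ⟨γ, g, h⟩
    exact ⟨_, (hpsd γ g).2 h⟩

theorem sqrt_sq_sub_sq_add_sqrt_sq_sub_sq_le {x₁ x₂ y₁ y₂ : ℝ} (h₁ : |y₁| ≤ x₁)
    (h₂ : |y₂| ≤ x₂) :
    √(x₁ ^ 2 - y₁ ^ 2) + √(x₂ ^ 2 - y₂ ^ 2) ≤ √((x₁ + x₂) ^ 2 - (y₁ + y₂) ^ 2) := by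
  obtain ⟨hx₁, hy₁⟩ := abs_le.mp h₁
  obtain ⟨hx₂, hy₂⟩ := abs_le.mp h₂
  have hd₁ : 0 ≤ x₁ ^ 2 - y₁ ^ 2 := sub_nonneg.2 (sq_le_sq' hx₁ hy₁)
  have hd₂ : 0 ≤ x₂ ^ 2 - y₂ ^ 2 := sub_nonneg.2 (sq_le_sq' hx₂ hy₂)
  have hcross : √(x₁ ^ 2 - y₁ ^ 2) * √(x₂ ^ 2 - y₂ ^ 2) ≤ x₁ * x₂ - y₁ * y₂ := by
    have hprod : 0 ≤ x₁ * x₂ - y₁ * y₂ := by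
      nlinarith [abs_mul_abs_self y₁, abs_mul y₁ y₂, neg_abs_le (y₁ * y₂),
        mul_le_mul h₁ h₂ (abs_nonneg y₂) ((abs_nonneg y₁).trans h₁)]
    rw [← Real.sqrt_mul hd₁, Real.sqrt_le_left hprod]
    nlinarith [sq_nonneg (x₁ * y₂ - x₂ * y₁)]
  rw [Real.le_sqrt (by positivity) (by nlinarith), add_sq, Real.sq_sqrt hd₁, Real.sq_sqrt hd₂]
  nlinarith

theorem two_mul_le_sqrt_sq_sub_sq {γ δ u w v : ℝ} (hγ : 0 ≤ γ) (hδ : 0 ≤ δ)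
    (h₁ : u ^ 2 + v ^ 2 ≤ γ ^ 2) (h₂ : w ^ 2 + v ^ 2 ≤ δ ^ 2) :
    2 * v ≤ √((γ + δ) ^ 2 - (u + w) ^ 2) := by
  have hv₁ : v ≤ √(γ ^ 2 - u ^ 2) := (le_abs_self v).trans (Real.abs_le_sqrt (by linarith))
  have hv₂ : v ≤ √(δ ^ 2 - w ^ 2) := (le_abs_self v).trans (Real.abs_le_sqrt (by linarith))
  have hu : |u| ≤ γ := abs_le_of_sq_le_sq (by nlinarith) hγ
  have hw : |w| ≤ δ := abs_le_of_sq_le_sq (by nlinarith) hδ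
  linarith [sqrt_sq_sub_sq_add_sqrt_sq_sub_sq_le hu hw]

theorem exists_sq_le_and_sub_sq_le {c p q : ℝ} (hc : 0 ≤ c) (hp : 0 ≤ p) (hq : 0 ≤ q)
    (h : c ≤ √p + √q) : ∃ s, s ^ 2 ≤ p ∧ (c - s) ^ 2 ≤ q := by
  refine ⟨min c √p, ?_, ?_⟩
  · exact (pow_le_pow_left₀ (le_min hc (Real.sqrt_nonneg p)) (min_le_right _ _) 2).trans
      (Real.sq_sqrt hp).le
  · refine (pow_le_pow_left₀ (sub_nonneg.2 (min_le_left _ _)) ?_ 2).trans (Real.sq_sqrt hq).le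
    rcases min_cases c √p with ⟨hmin, -⟩ | ⟨hmin, -⟩ <;> rw [hmin] <;> linarith [Real.sqrt_nonneg q]

section OrthonormalPair

variable {E : Type*} [NormedAddCommGroup E] [InnerProductSpace ℝ E] {n m : E}

theorem inner_sq_add_inner_sq_le (hn : ‖n‖ = 1) (hm : ‖m‖ = 1) (horth : ⟪n, m⟫ = 0) (w : E) :
    ⟪n, w⟫ ^ 2 + ⟪m, w⟫ ^ 2 ≤ ‖w‖ ^ 2 := by
  have hon : Orthonormal ℝ ![n, m] := by simp [hn, hm, horth]
  simpa [Fin.sum_univ_two] using hon.sum_inner_products_le (s := Finset.univ) w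

theorem sub_inner_sq_add_sub_inner_sq_le (hn : ‖n‖ = 1) (hm : ‖m‖ = 1) (horth : ⟪n, m⟫ = 0)
    {x y r : ℝ} {g : E} (h : ‖x • n + y • m - g‖ ≤ r) :
    (x - ⟪n, g⟫) ^ 2 + (y - ⟪m, g⟫) ^ 2 ≤ r ^ 2 := by
  have hproj := inner_sq_add_inner_sq_le hn hm horth (x • n + y • m - g)
  simp only [inner_sub_right, inner_add_right, real_inner_smul_right, real_inner_self_eq_norm_sq,
    hn, hm, horth, real_inner_comm n m] at hproj
  simpa using hproj.trans (pow_le_pow_left₀ (norm_nonneg _) h 2)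

theorem norm_smul_add_smul_le (hn : ‖n‖ = 1) (hm : ‖m‖ = 1) (horth : ⟪n, m⟫ = 0)
    {x y r : ℝ} (hr : 0 ≤ r) (h : x ^ 2 + y ^ 2 ≤ r ^ 2) : ‖x • n + y • m‖ ≤ r := by
  have hpyth : ‖x • n + y • m‖ ^ 2 = x ^ 2 + y ^ 2 := by
    rw [sq, norm_add_sq_eq_norm_sq_add_norm_sq_real (by simp [real_inner_smul_left,
      real_inner_smul_right, horth]), norm_smul, norm_smul, hn, hm]
    simp [sq]
  rwa [← sq_le_sq₀ (norm_nonneg _) hr, hpyth]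

theorem two_mul_le_sqrt_add_sqrt_of_norm_le (hn : ‖n‖ = 1) (hm : ‖m‖ = 1)
    (horth : ⟪n, m⟫ = 0) {a b α β γ : ℝ} {g : E} (hg : ‖g‖ ≤ γ) (hag : ‖a • n - g‖ ≤ α - γ)
    (hbg : ‖b • m - g‖ ≤ β - γ) (habg : ‖a • n + b • m - g‖ ≤ 2 + γ - α - β) :
    2 * b ≤ √(α ^ 2 - a ^ 2) + √((2 - α) ^ 2 - a ^ 2) := by
  have h₁ := sub_inner_sq_add_sub_inner_sq_le hn hm horth (x := 0) (y := 0) (by simpa using hg)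
  have h₂ := sub_inner_sq_add_sub_inner_sq_le hn hm horth (x := a) (y := 0) (by simpa using hag)
  have h₃ := sub_inner_sq_add_sub_inner_sq_le hn hm horth (x := 0) (y := b) (by simpa using hbg)
  have h₄ := sub_inner_sq_add_sub_inner_sq_le hn hm horth habg
  simp only [zero_sub, neg_sq] at h₁ h₂ h₃
  have hv := two_mul_le_sqrt_sq_sub_sq ((norm_nonneg _).trans hg) ((norm_nonneg _).trans hag)
    h₁ h₂
  have hbv := two_mul_le_sqrt_sq_sub_sq ((norm_nonneg _).trans hbg) ((norm_nonneg _).trans habg)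
    h₃ h₄
  rw [add_sub_cancel, add_sub_cancel] at hv
  rw [add_sub_cancel, show β - γ + (2 + γ - α - β) = 2 - α by ring] at hbv
  linarith

end OrthonormalPair

theorem orthogonal_coexistence_criterion_general (a α b : ℝ) (n m : EuclideanSpace ℝ (Fin 3))
    (hn : ‖n‖ = 1) (hm : ‖m‖ = 1) (horth : ⟪n, m⟫ = 0)
    (h0 : 0 ≤ a) (h1 : a ≤ α) (h2 : α ≤ 1) (hb0 : 0 ≤ b) :
    Coexistent (qubitEffect α (a • n)) (qubitEffect 1 (b • m)) ↔
      b ≤ (1 / 2) * Real.sqrt ((2 - α) ^ 2 - a ^ 2) +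
          (1 / 2) * Real.sqrt (α ^ 2 - a ^ 2) := by
  rw [coexistent_qubitEffect_iff]
  constructor
  · rintro ⟨γ, g, hg, hag, hbg, habg⟩
    linarith [two_mul_le_sqrt_add_sqrt_of_norm_le hn hm horth hg hag hbg habg]
  · intro hb
    obtain ⟨s, hs, hbs⟩ := exists_sq_le_and_sub_sq_le (c := 2 * b) (p := α ^ 2 - a ^ 2)
      (q := (2 - α) ^ 2 - a ^ 2) (by positivity) (by nlinarith) (by nlinarith) (by linarith)
    refine ⟨α / 2, (a / 2) • n + (s / 2) • m, ?_, ?_, ?_, ?_⟩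
    · exact norm_smul_add_smul_le hn hm horth (by linarith) (by nlinarith)
    · rw [show a • n - ((a / 2) • n + (s / 2) • m) = (a / 2) • n + (-(s / 2)) • m by module]
      exact norm_smul_add_smul_le hn hm horth (by linarith) (by nlinarith)
    · rw [show b • m - ((a / 2) • n + (s / 2) • m) = (-(a / 2)) • n + ((2 * b - s) / 2) • m by
        module]
      exact norm_smul_add_smul_le hn hm horth (by linarith) (by nlinarith)
    · rw [show a • n + b • m - ((a / 2) • n + (s / 2) • m) =
          (a / 2) • n + ((2 * b - s) / 2) • m by module]
      exact norm_smul_add_smul_le hn hm horth (by linarith) (by nlinarith)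

theorem orthogonal_coexistence_criterion (a α b : ℝ) (n m : EuclideanSpace ℝ (Fin 3))
    (hn : ‖n‖ = 1) (hm : ‖m‖ = 1) (horth : ⟪n, m⟫ = 0)
    (h0 : 0 ≤ a) (h1 : a ≤ α) (h2 : α ≤ 1) (hb0 : 0 ≤ b) (hb1 : b ≤ 1) :
    Coexistent (qubitEffect α (a • n)) (qubitEffect 1 (b • m)) ↔
      b ≤ (1 / 2) * Real.sqrt ((2 - α) ^ 2 - a ^ 2) +
          (1 / 2) * Real.sqrt (α ^ 2 - a ^ 2) :=
  orthogonal_coexistence_criterion_general a α b n m hn hm horth h0 h1 h2 hb0
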